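/- arXiv:1712.03825 — 2 statements merged into one kernel-verified Lean document; each statement's English description precedes it below -/
import Mathlib

section
/- Let $E_1, \dots, E_n$ be real numbers sorted so that $E_{k_1} \le \dots \le E_{k_n}$, let $\tau, \rho > 0$, and define $F(J) = \frac{1}{|J|}\sum_{k\in J} E_k - \tau(1 - e^{-\rho|J|})$ for nonempty $J \subseteq \{1,\dots,n\}$. Then $\min_{J \neq \emptyset} F(J) = \min_{1 \le j \le n} \left(\frac{1}{j}\sum_{i=1}^j E_{k_i} - \tau(1 - e^{-\rho j})\right)$; i.e., a global minimizer can always be chosen among the $n$ prefix sets $\{k_1,\dots,k_j\}$. -/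
/-!
Both terms of `F J` depend on `J` only through `|J|` and `∑_{k ∈ J} E_k`, so among the subsets
of a given size the best one minimises the sum, and that is the set of the `|J|` smallest values,
i.e. a prefix of the sorted order: the `i`-th smallest element of any set of indices is at
least `i`, so listing both sets in increasing order compares them termwise.
-/

open Finset Real

namespace Fin

lemma val_le_of_strictMono {m n : ℕ} {f : Fin m → Fin n} (hf : StrictMono f) (i : Fin m) :
    (i : ℕ) ≤ f i := by
  simpa only [card_Iio] using
    card_le_card_of_injOn f (fun a ha => mem_Iio.mpr (hf (mem_Iio.mp ha))) hf.injective.injOn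

lemma filter_val_lt_eq_map_castLEEmb {m n : ℕ} (h : m ≤ n) :
    univ.filter (fun i : Fin n => (i : ℕ) < m) = univ.map (castLEEmb h) := by
  ext i
  simp only [mem_filter, mem_univ, true_and, mem_map, castLEEmb_apply]
  exact ⟨fun hi => ⟨⟨i, hi⟩, rfl⟩, fun ⟨j, hj⟩ => hj ▸ j.isLt⟩

lemma sum_filter_val_lt_card_le_sum {M : Type*} [AddCommMonoid M] [PartialOrder M]
    [IsOrderedAddMonoid M] {n : ℕ} {g : Fin n → M} (hg : Monotone g) (S : Finset (Fin n)) :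
    ∑ i ∈ univ.filter (fun i : Fin n => (i : ℕ) < #S), g i ≤ ∑ i ∈ S, g i := by
  have hS : #S ≤ n := (card_le_univ S).trans_eq (Fintype.card_fin n)
  set e := S.orderEmbOfFin rfl
  calc ∑ i ∈ univ.filter (fun i : Fin n => (i : ℕ) < #S), g i
        = ∑ i : Fin #S, g (castLE hS i) := by
        rw [filter_val_lt_eq_map_castLEEmb hS, sum_map]; rfl
    _ ≤ ∑ i : Fin #S, g (e i) :=
        sum_le_sum fun i _ => hg (val_le_of_strictMono e.strictMono i)
    _ = ∑ i ∈ S, g i := by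
        conv_rhs => rw [← S.image_orderEmbOfFin_univ rfl]
        exact (sum_image fun a _ b _ hab => e.injective hab).symm

end Fin

theorem global_min_attained_on_prefixes_general (n : ℕ) (E : Fin n → ℝ)
    (k : Equiv.Perm (Fin n)) (hk : Monotone (fun i => E (k i)))
    (τ ρ : ℝ)
    (F : Finset (Fin n) → ℝ)
    (hF : ∀ J, F J = (J.card : ℝ)⁻¹ * ∑ i ∈ J, E i - τ * (1 - exp (-ρ * J.card)))
    (J : Finset (Fin n)) (hJ : J.Nonempty) :
    ∃ j, 1 ≤ j ∧ j ≤ n ∧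
      F ((Finset.univ.filter (fun i : Fin n => (i : ℕ) < j)).image k) ≤ F J := by
  set P := (univ.filter fun i : Fin n => (i : ℕ) < #J).image k
  have hJn : #J ≤ n := (card_le_univ J).trans_eq (Fintype.card_fin n)
  have hcard : #P = #J := by
    rw [card_image_of_injective _ k.injective, Fin.card_filter_val_lt, min_eq_right hJn]
  have hsum : ∑ i ∈ P, E i ≤ ∑ i ∈ J, E i := by
    rw [sum_image fun a _ b _ hab => k.injective hab]
    simpa [sum_map] using Fin.sum_filter_val_lt_card_le_sum hk (J.map k.symm.toEmbedding)
  refine ⟨#J, hJ.card_pos, hJn, ?_⟩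
  rw [hF, hF, hcard]
  gcongr

/-- A global minimizer of the IRIS `J`-subproblem energy over all nonempty
    subsets can always be chosen among the `n` prefix sets obtained by sorting. -/
theorem global_min_attained_on_prefixes (n : ℕ) (E : Fin n → ℝ)
    (k : Equiv.Perm (Fin n)) (hk : Monotone (fun i => E (k i)))
    (τ ρ : ℝ) (hτ : 0 < τ) (hρ : 0 < ρ)
    (F : Finset (Fin n) → ℝ)
    (hF : ∀ J, F J = (J.card : ℝ)⁻¹ * ∑ i ∈ J, E i - τ * (1 - exp (-ρ * J.card)))
    (J : Finset (Fin n)) (hJ : J.Nonempty) :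
    ∃ j, 1 ≤ j ∧ j ≤ n ∧
      F ((Finset.univ.filter (fun i : Fin n => (i : ℕ) < j)).image k) ≤ F J :=
  global_min_attained_on_prefixes_general n E k hk τ ρ F hF J hJ
end

section
/- Under the setup of the previous statement (alternating minimization of $E_1(I,J)$ where the $I$-update is the exact average over $J$ and the $J$-update is an exact minimizer), the sequence of energies $E_1(I^t, J^t)$ is eventually constant; i.e., there exists $T$ such that $E_1(I^{t+1},J^{t+1}) = E_1(I^t,J^t)$ for all $t \ge T$. -/
/-!
The `I`-step replaces `I` by the average over `J`, which minimises the sum of squared distances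
(König–Huygens), and the `J`-step is an exact minimiser, so the energy is antitone along the
iteration. From the first step on, `I^t` is the average over `J^t`, so the energy only takes the
finitely many values `E₁(avg S, S)` with `S ⊆ {1, …, n}` (plus its initial value), and an antitone
sequence with finite range is eventually constant.
-/

open Finset Real Filter

theorem Antitone.eventuallyConst_atTop_of_finite_range {α : Type*} [LinearOrder α] {u : ℕ → α}
    (hu : Antitone u) (hfin : (Set.range u).Finite) : EventuallyConst u atTop := by
  obtain ⟨_, ⟨t₀, rfl⟩, hmin⟩ := Set.exists_min_image _ id hfin (Set.range_nonempty u)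
  exact eventuallyConst_atTop.mpr ⟨t₀, fun t ht => le_antisymm (hu ht) (hmin _ ⟨t, rfl⟩)⟩

section Mean

open RealInnerProductSpace

variable {ι F : Type*} [NormedAddCommGroup F] [InnerProductSpace ℝ F]

theorem Finset.sum_norm_sub_sq_eq_card_mul_add (S : Finset ι) (f : ι → F) (x : F) :
    ∑ k ∈ S, ‖x - f k‖ ^ 2 = (S.card : ℝ) * ‖x - (S.card : ℝ)⁻¹ • ∑ j ∈ S, f j‖ ^ 2
      + ∑ k ∈ S, ‖(S.card : ℝ)⁻¹ • ∑ j ∈ S, f j - f k‖ ^ 2 := by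
  obtain rfl | hS := S.eq_empty_or_nonempty
  · simp
  set m : F := (S.card : ℝ)⁻¹ • ∑ j ∈ S, f j
  have hcard : (S.card : ℝ) ≠ 0 := Nat.cast_ne_zero.mpr hS.card_pos.ne'
  have hdev : ∑ k ∈ S, (m - f k) = 0 := by
    rw [sum_sub_distrib, sum_const, ← Nat.cast_smul_eq_nsmul ℝ, smul_smul, mul_inv_cancel₀ hcard,
      one_smul, sub_self]
  have hsplit : ∀ k ∈ S, ‖x - f k‖ ^ 2 = ‖x - m‖ ^ 2 + 2 * ⟪x - m, m - f k⟫ + ‖m - f k‖ ^ 2 := by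
    intro k _
    rw [← norm_add_sq_real, sub_add_sub_cancel]
  rw [sum_congr rfl hsplit, sum_add_distrib, sum_add_distrib, sum_const, ← mul_sum, ← inner_sum,
    hdev, inner_zero_right, nsmul_eq_mul]
  ring

theorem Finset.sum_norm_mean_sub_sq_le (S : Finset ι) (f : ι → F) (x : F) :
    ∑ k ∈ S, ‖(S.card : ℝ)⁻¹ • ∑ j ∈ S, f j - f k‖ ^ 2 ≤ ∑ k ∈ S, ‖x - f k‖ ^ 2 := by
  rw [S.sum_norm_sub_sq_eq_card_mul_add f x]
  exact le_add_of_nonneg_left (by positivity)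

noncomputable def irisEnergy (Ik : ι → F) (Q : ι → ℝ) (lam τ ρ : ℝ) (x : F) (S : Finset ι) : ℝ :=
  (S.card : ℝ)⁻¹ * ∑ k ∈ S, (‖x - Ik k‖ ^ 2 + lam * Q k) - τ * (1 - exp (-ρ * S.card))

theorem irisEnergy_mean_le (Ik : ι → F) (Q : ι → ℝ) (lam τ ρ : ℝ) (S : Finset ι) (x : F) :
    irisEnergy Ik Q lam τ ρ ((S.card : ℝ)⁻¹ • ∑ k ∈ S, Ik k) S ≤ irisEnergy Ik Q lam τ ρ x S := by
  unfold irisEnergy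
  rw [sum_add_distrib, sum_add_distrib]
  gcongr _ * (?_ + _) - _
  exact S.sum_norm_mean_sub_sq_le Ik x

end Mean

theorem IRIS_energy_eventually_constant_general (d n : ℕ) (Ik : Fin n → EuclideanSpace ℝ (Fin d))
    (Q : Fin n → ℝ)
    (lam τ ρ : ℝ)
    (E1 : EuclideanSpace ℝ (Fin d) → Finset (Fin n) → ℝ)
    (hE1 : ∀ I J, E1 I J = (J.card : ℝ)⁻¹ * ∑ k ∈ J, (‖I - Ik k‖ ^ 2 + lam * Q k)
      - τ * (1 - exp (-ρ * J.card)))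
    (I : ℕ → EuclideanSpace ℝ (Fin d)) (J : ℕ → Finset (Fin n))
    (hJne : ∀ t, (J t).Nonempty)
    (hJmin : ∀ t, ∀ J' : Finset (Fin n), J'.Nonempty → E1 (I t) (J (t + 1)) ≤ E1 (I t) J')
    (hIavg : ∀ t, I (t + 1) = ((J (t + 1)).card : ℝ)⁻¹ • ∑ k ∈ J (t + 1), Ik k) :
    ∃ T : ℕ, ∀ t, T ≤ t → E1 (I (t + 1)) (J (t + 1)) = E1 (I t) (J t) := by
  obtain rfl : E1 = irisEnergy Ik Q lam τ ρ := funext fun x => funext fun S => hE1 x S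
  set energyAtMean : Finset (Fin n) → ℝ :=
    fun S => irisEnergy Ik Q lam τ ρ ((S.card : ℝ)⁻¹ • ∑ k ∈ S, Ik k) S
  have hstep (t : ℕ) : irisEnergy Ik Q lam τ ρ (I (t + 1)) (J (t + 1)) = energyAtMean (J (t + 1)) := by
    rw [hIavg]
  have hanti : Antitone fun t => irisEnergy Ik Q lam τ ρ (I t) (J t) :=
    antitone_nat_of_succ_le fun t => calc
      _ = energyAtMean (J (t + 1)) := hstep t
      _ ≤ irisEnergy Ik Q lam τ ρ (I t) (J (t + 1)) := irisEnergy_mean_le Ik Q lam τ ρ _ _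
      _ ≤ irisEnergy Ik Q lam τ ρ (I t) (J t) := hJmin t (J t) (hJne t)
  have hfin : (Set.range fun t => irisEnergy Ik Q lam τ ρ (I t) (J t)).Finite := by
    refine ((Set.finite_range energyAtMean).insert (irisEnergy Ik Q lam τ ρ (I 0) (J 0))).subset ?_
    rintro _ ⟨_ | t, rfl⟩
    · exact Set.mem_insert _ _
    · exact Set.mem_insert_of_mem _ ⟨J (t + 1), (hstep t).symm⟩
  exact eventuallyConst_atTop_nat.mp (hanti.eventuallyConst_atTop_of_finite_range hfin)

/-- Along the alternating IRIS scheme, the energy sequence is eventually constant. -/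
theorem IRIS_energy_eventually_constant (d n : ℕ) (Ik : Fin n → EuclideanSpace ℝ (Fin d))
    (Q : Fin n → ℝ) (hQ : ∀ i, 0 ≤ Q i)
    (lam τ ρ : ℝ) (hlam : 0 < lam) (hτ : 0 < τ) (hρ : 0 < ρ)
    (E1 : EuclideanSpace ℝ (Fin d) → Finset (Fin n) → ℝ)
    (hE1 : ∀ I J, E1 I J = (J.card : ℝ)⁻¹ * ∑ k ∈ J, (‖I - Ik k‖ ^ 2 + lam * Q k)
      - τ * (1 - exp (-ρ * J.card)))
    (I : ℕ → EuclideanSpace ℝ (Fin d)) (J : ℕ → Finset (Fin n))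
    (hJne : ∀ t, (J t).Nonempty)
    (hJmin : ∀ t, ∀ J' : Finset (Fin n), J'.Nonempty → E1 (I t) (J (t + 1)) ≤ E1 (I t) J')
    (hIavg : ∀ t, I (t + 1) = ((J (t + 1)).card : ℝ)⁻¹ • ∑ k ∈ J (t + 1), Ik k) :
    ∃ T : ℕ, ∀ t, T ≤ t → E1 (I (t + 1)) (J (t + 1)) = E1 (I t) (J t) :=
  IRIS_energy_eventually_constant_general d n Ik Q lam τ ρ E1 hE1 I J hJne hJmin hIavg
end
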